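/- arXiv:2102.08841 — 3 statements merged into one kernel-verified Lean document; each statement's English description precedes it below -/
import Mathlib

section
/- Let A be the m×m symmetric tridiagonal matrix with corner diagonal entries a, interior diagonal entries c, and off-diagonal entries b, where c² > 4b² and b ≠ 0. With λ₁ = (-c + √(c² - 4b²))/(2b) and λ₂ = (-c - √(c² - 4b²))/(2b), det(A) = ((-1)^m b^{m-1} / √(c²-4b²)) · (a²(λ₁^{m-1} - λ₂^{m-1}) + 2ab(λ₁^{m-2} - λ₂^{m-2}) + b²(λ₁^{m-3} - λ₂^{m-3})). -/
/-!
Expanding along the first row gives the continuant recurrence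
`D(d₀, d₁, …) = d₀ D(d₁, …) - b² D(d₂, …)` for tridiagonal determinants. For the diagonal
`(c, …, c, a)` this is the constant-coefficient recurrence with characteristic roots
`x₁, x₂ = (c ± √(c² - 4b²)) / 2`, so `x₁ + x₂ = c`, `x₁ x₂ = b²`, and Binet's formula gives
`(x₁ - x₂) D = (a x₁ - b²) x₁ᵏ - (a x₂ - b²) x₂ᵏ`. One more expansion accounts for the first
corner `a`, and the paper's roots are `λ₁ = -x₂ / b`, `λ₂ = -x₁ / b`.
-/

open Real Matrix

/-- The diagonal is indexed by `ℕ` so that deleting the first row and column shifts it. -/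
def tridiag {R : Type*} [Zero R] (d : ℕ → R) (b : R) (n : ℕ) : Matrix (Fin n) (Fin n) R :=
  Matrix.of fun i j =>
    if (i : ℕ) = j then d i else if (i : ℕ) + 1 = j ∨ (j : ℕ) + 1 = i then b else 0

section

variable {R : Type*} [CommRing R]

lemma tridiag_submatrix_succ (d : ℕ → R) (b : R) (n : ℕ) :
    (tridiag d b (n + 1)).submatrix Fin.succ Fin.succ = tridiag (fun i => d (i + 1)) b n := by
  ext i j
  simp only [tridiag, submatrix_apply, of_apply, Fin.val_succ, add_right_cancel_iff]

lemma det_tridiag_succ_succ (d : ℕ → R) (b : R) (n : ℕ) :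
    (tridiag d b (n + 2)).det =
      d 0 * (tridiag (fun i => d (i + 1)) b (n + 1)).det
        - b ^ 2 * (tridiag (fun i => d (i + 2)) b n).det := by
  have minor_one : ((tridiag d b (n + 2)).submatrix Fin.succ (Fin.succAbove 1)).det =
      b * (tridiag (fun i => d (i + 2)) b n).det := by
    have succAbove_one_comp : Fin.succAbove 1 ∘ Fin.succ = Fin.succ ∘ (Fin.succ : Fin n → _) :=
      funext Fin.one_succAbove_succ
    have lower_block : (tridiag d b (n + 2)).submatrix (Fin.succ ∘ Fin.succ) (Fin.succ ∘ Fin.succ)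
        = tridiag (fun i => d (i + 2)) b n := by
      rw [← submatrix_submatrix, tridiag_submatrix_succ, tridiag_submatrix_succ]
    rw [det_succ_column_zero, Fin.sum_univ_succ]
    simp only [submatrix_apply, submatrix_submatrix, Fin.succAbove_zero, succAbove_one_comp,
      lower_block]
    simp [tridiag]
  rw [det_succ_row_zero, Fin.sum_univ_succ, Fin.sum_univ_succ]
  simp only [Fin.succAbove_zero, tridiag_submatrix_succ, Fin.succ_zero_eq_one, minor_one]
  simp [tridiag]
  ring

lemma sub_mul_eq_of_recurrence {u : ℕ → R} {x₁ x₂ : R}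
    (hu : ∀ k, u (k + 2) = (x₁ + x₂) * u (k + 1) - x₁ * x₂ * u k) (k : ℕ) :
    (x₁ - x₂) * u k = (u 1 - x₂ * u 0) * x₁ ^ k - (u 1 - x₁ * u 0) * x₂ ^ k := by
  induction k using Nat.twoStepInduction with
  | zero => ring
  | one => ring
  | more k ih₀ ih₁ => rw [hu]; linear_combination (x₁ + x₂) * ih₁ - x₁ * x₂ * ih₀

lemma det_tridiag_ite_last_succ_succ (a b c : R) (k : ℕ) :
    (tridiag (fun i => if i = k + 2 then a else c) b (k + 3)).det =
      c * (tridiag (fun i => if i = k + 1 then a else c) b (k + 2)).det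
        - b ^ 2 * (tridiag (fun i => if i = k then a else c) b (k + 1)).det := by
  simp [det_tridiag_succ_succ]

lemma sub_mul_det_tridiag_ite_last {a b c x₁ x₂ : R} (hc : x₁ + x₂ = c) (hb : x₁ * x₂ = b ^ 2)
    (k : ℕ) :
    (x₁ - x₂) * (tridiag (fun i => if i = k then a else c) b (k + 1)).det =
      (a * x₁ - b ^ 2) * x₁ ^ k - (a * x₂ - b ^ 2) * x₂ ^ k := by
  have u₀ : (tridiag (fun i => if i = 0 then a else c) b 1).det = a := by simp [tridiag]
  have u₁ : (tridiag (fun i => if i = 1 then a else c) b 2).det = c * a - b ^ 2 := by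
    simp [tridiag, det_fin_two]
    ring
  have binet := sub_mul_eq_of_recurrence
    (u := fun k => (tridiag (fun i => if i = k then a else c) b (k + 1)).det)
    (x₁ := x₁) (x₂ := x₂) (fun k => by rw [hc, hb]; exact det_tridiag_ite_last_succ_succ a b c k) k
  dsimp only [Nat.reduceAdd] at binet
  rw [u₀, u₁] at binet
  rw [binet, ← hc]
  ring

lemma sub_mul_det_tridiag_ite_ends {a b c x₁ x₂ : R} (hc : x₁ + x₂ = c) (hb : x₁ * x₂ = b ^ 2)
    (k : ℕ) :
    (x₁ - x₂) * (tridiag (fun i => if i = 0 ∨ i = k + 2 then a else c) b (k + 3)).det =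
      (a * x₁ - b ^ 2) ^ 2 * x₁ ^ k - (a * x₂ - b ^ 2) ^ 2 * x₂ ^ k := by
  rw [det_tridiag_succ_succ]
  simp only [Nat.add_eq_zero_iff, OfNat.ofNat_ne_zero, one_ne_zero, and_false, false_or,
    add_left_inj, true_or, if_true]
  linear_combination a * sub_mul_det_tridiag_ite_last (a := a) hc hb (k + 1)
    - b ^ 2 * sub_mul_det_tridiag_ite_last (a := a) hc hb k

lemma neg_one_pow_mul_corner_poly (a b l : R) (n : ℕ) :
    (-1) ^ (n + 3) * b ^ (n + 2) * (a ^ 2 * l ^ (n + 2) + 2 * a * b * l ^ (n + 1) + b ^ 2 * l ^ n)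
      = -((a * -(b * l) - b ^ 2) ^ 2 * (-(b * l)) ^ n) := by
  ring

end

/-- Determinant of the symmetric tridiagonal matrix with corner diagonal entries `a`,
interior diagonal entries `c` and off-diagonal entries `b`, where `c² > 4b²`, `b ≠ 0`,
in terms of the characteristic roots λ₁, λ₂. -/
theorem tridiagonal_det_formula (m : ℕ) (hm : 3 ≤ m) (a b c : ℝ) (hb : b ≠ 0)
    (hc : 4 * b ^ 2 < c ^ 2)
    (A : Matrix (Fin m) (Fin m) ℝ)
    (hA : ∀ i j : Fin m, A i j =
      if i = j then (if (i : ℕ) = 0 ∨ (i : ℕ) = m - 1 then a else c)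
      else if (i : ℕ) + 1 = (j : ℕ) ∨ (j : ℕ) + 1 = (i : ℕ) then b else 0) :
    A.det = ((-1) ^ m * b ^ (m - 1) / Real.sqrt (c ^ 2 - 4 * b ^ 2)) *
      (a ^ 2 * (((-c + Real.sqrt (c ^ 2 - 4 * b ^ 2)) / (2 * b)) ^ (m - 1)
              - ((-c - Real.sqrt (c ^ 2 - 4 * b ^ 2)) / (2 * b)) ^ (m - 1))
      + 2 * a * b * (((-c + Real.sqrt (c ^ 2 - 4 * b ^ 2)) / (2 * b)) ^ (m - 2)
              - ((-c - Real.sqrt (c ^ 2 - 4 * b ^ 2)) / (2 * b)) ^ (m - 2))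
      + b ^ 2 * (((-c + Real.sqrt (c ^ 2 - 4 * b ^ 2)) / (2 * b)) ^ (m - 3)
              - ((-c - Real.sqrt (c ^ 2 - 4 * b ^ 2)) / (2 * b)) ^ (m - 3))) := by
  obtain ⟨n, rfl⟩ : ∃ n, m = n + 3 := ⟨m - 3, by omega⟩
  set s := √(c ^ 2 - 4 * b ^ 2)
  have hs : s ^ 2 = c ^ 2 - 4 * b ^ 2 := sq_sqrt (by linarith)
  have hs₀ : s ≠ 0 := (sqrt_pos.mpr (by linarith)).ne'
  set l₁ := (-c + s) / (2 * b)
  set l₂ := (-c - s) / (2 * b)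
  have hA_tridiag : A = tridiag (fun i => if i = 0 ∨ i = n + 2 then a else c) b (n + 3) := by
    ext i j
    simp only [hA, tridiag, of_apply, Fin.val_inj]
    rfl
  have hbl₁ : b * l₁ = (s - c) / 2 := by unfold l₁; field_simp; ring
  have hbl₂ : b * l₂ = -(c + s) / 2 := by unfold l₂; field_simp; ring
  clear_value l₁ l₂
  have hsum : -(b * l₂) + -(b * l₁) = c := by linear_combination -hbl₁ - hbl₂
  have hprod : -(b * l₂) * -(b * l₁) = b ^ 2 := by
    linear_combination (b * l₁) * hbl₂ - (c + s) / 2 * hbl₁ - hs / 4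
  have hdiff : -(b * l₂) - -(b * l₁) = s := by linear_combination hbl₁ - hbl₂
  have hdet := sub_mul_det_tridiag_ite_ends (a := a) hsum hprod n
  rw [hdiff] at hdet
  rw [hA_tridiag, show n + 3 - 1 = n + 2 from rfl, show n + 3 - 2 = n + 1 from rfl,
    show n + 3 - 3 = n from rfl, div_mul_eq_mul_div, eq_div_iff hs₀]
  linear_combination hdet + neg_one_pow_mul_corner_poly a b l₁ n
    - neg_one_pow_mul_corner_poly a b l₂ n
end

section
/- Second-order expansion of the determinant ratio for uniform sampling at low SNR: det(A_{mm})/(γ det A) = 1 − ((1−ρ^{2m})/(1−ρ²)) γ + ( ((1−ρ^{2m})(1+ρ²))/(1−ρ²)² − 2mρ^{2m}/(1−ρ²) ) γ² + O(γ³) as γ → 0, where A = (1/γ) T' + I with T' the tridiagonal inverse-correlation matrix of an AR(1) process with parameter ρ. -/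
/-!
`T'` is the inverse of the Kac–Murdock–Szegő matrix `S = (ρ ^ |i - j|)`. By the cofactor
formula, `det A_mm / det A` is the last diagonal entry of `A⁻¹ = γ (1 + γ S)⁻¹ S`, so the ratio is
the last diagonal entry of `(1 + γ S)⁻¹ S = S - γ S² + γ² S³ - γ³ S³ (1 + γ S)⁻¹ S`, and the
remainder factor stays bounded as `γ → 0` by continuity of the matrix inverse at `1`. Since `S` is
persymmetric, the last diagonal entries of `S²` and `S³` equal the first ones,
`∑ ρ ^ (2 t)` and `∑_{a, b} ρ ^ (2 max a b)`, which are summed in closed form.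
-/

open Matrix Finset Filter Topology

theorem sum_range_sum_range_pow_max {R : Type*} [CommSemiring R] (x : R) (n : ℕ) :
    ∑ a ∈ range n, ∑ b ∈ range n, x ^ max a b = ∑ t ∈ range n, (2 * t + 1 : R) * x ^ t := by
  induction n with
  | zero => simp
  | succ n ih =>
    have hrow (a) (ha : a ∈ range n) :
        ∑ b ∈ range (n + 1), x ^ max a b = ∑ b ∈ range n, x ^ max a b + x ^ n := by
      rw [sum_range_succ, max_eq_right (mem_range.1 ha).le]
    have hlast : ∑ b ∈ range (n + 1), x ^ max n b = (n + 1 : R) * x ^ n := by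
      rw [sum_congr rfl fun b hb => by rw [max_eq_left (Nat.lt_succ_iff.1 (mem_range.1 hb))],
        sum_const, card_range, nsmul_eq_mul, Nat.cast_succ]
    rw [sum_range_succ, hlast, sum_congr rfl hrow, sum_add_distrib, ih, sum_const, card_range,
      nsmul_eq_mul, sum_range_succ]
    ring

theorem sum_range_odd_mul_pow {K : Type*} [Field K] {x : K} (hx : x ≠ 1) (n : ℕ) :
    ∑ t ∈ range n, (2 * t + 1 : K) * x ^ t =
      (1 - x ^ n) * (1 + x) / (1 - x) ^ 2 - 2 * n * x ^ n / (1 - x) := by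
  have hx' : 1 - x ≠ 0 := sub_ne_zero.2 hx.symm
  induction n with
  | zero => simp
  | succ n ih =>
    rw [sum_range_succ, ih]
    field_simp
    push_cast
    ring

theorem third_order_expansion_of_one_add_smul_mul_eq {R A : Type*} [CommRing R] [Ring A]
    [Algebra R A] {s r : A} {γ : R} (h : (1 + γ • s) * r = s) :
    r = s - γ • s ^ 2 + γ ^ 2 • s ^ 3 - γ ^ 3 • (s ^ 3 * r) := by
  have hr : r = s - γ • (s * r) := by
    rw [add_mul, one_mul, smul_mul_assoc] at h
    exact eq_sub_of_add_eq h
  have step (p : ℕ) : s ^ p * r = s ^ (p + 1) - γ • (s ^ (p + 1) * r) := by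
    conv_lhs => rw [hr]
    rw [mul_sub, mul_smul_comm, ← mul_assoc, ← pow_succ]
  conv_lhs => rw [hr, ← pow_one s, step, step]
  simp only [Nat.reduceAdd, pow_one]
  module

namespace Matrix

theorem det_submatrix_castSucc_div_det {K : Type*} [Field K] {k : ℕ}
    (B : Matrix (Fin (k + 1)) (Fin (k + 1)) K) :
    (B.submatrix Fin.castSucc Fin.castSucc).det / B.det = B⁻¹ (Fin.last k) (Fin.last k) := by
  rw [inv_def, Ring.inverse_eq_inv, smul_apply, adjugate_fin_succ_eq_det_submatrix,
    Fin.succAbove_last, Fin.val_last, ← two_mul, pow_mul, neg_one_sq, one_pow, one_mul,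
    smul_eq_mul, div_eq_inv_mul]

theorem pow_apply_rev_rev {R : Type*} [Semiring R] {n : ℕ} {M : Matrix (Fin n) (Fin n) R}
    (hM : ∀ i j, M i.rev j.rev = M i j) (p : ℕ) (i j : Fin n) :
    (M ^ p) i.rev j.rev = (M ^ p) i j := by
  induction p generalizing i j with
  | zero => simp [one_apply]
  | succ p ih =>
    rw [pow_succ, mul_apply, mul_apply, ← Equiv.sum_comp Fin.revPerm]
    simp only [Fin.revPerm_apply, ih, hM]

variable {n : Type*} [Fintype n] [DecidableEq n]

theorem inv_inv_smul_add_one_of_mul_eq_one {K : Type*} [Field K] {T S : Matrix n n K}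
    (hTS : T * S = 1) {γ : K} (hγ : γ ≠ 0) : (γ⁻¹ • T + 1)⁻¹ = γ • ((1 + γ • S)⁻¹ * S) := by
  have hfactor : γ⁻¹ • T + 1 = (γ⁻¹ • T) * (1 + γ • S) := by
    rw [mul_add, mul_one, smul_mul_smul_comm, inv_mul_cancel₀ hγ, hTS, one_smul]
  have hinv : (γ⁻¹ • T)⁻¹ = γ • S := inv_eq_right_inv <| by
    rw [smul_mul_smul_comm, inv_mul_cancel₀ hγ, hTS, one_smul]
  rw [hfactor, mul_inv_rev, hinv, mul_smul_comm]

theorem exists_abs_inv_one_add_smul_mul_apply_sub_le (S : Matrix n n ℝ) (i j : n) :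
    ∃ C γ₀ : ℝ, 0 < γ₀ ∧ ∀ γ : ℝ, |γ| < γ₀ →
      |((1 + γ • S)⁻¹ * S) i j - (S - γ • S ^ 2 + γ ^ 2 • S ^ 3) i j| ≤ C * |γ| ^ 3 := by
  have hinv : ContinuousAt (fun γ : ℝ => (1 + γ • S)⁻¹) 0 := by
    have : ContinuousAt Inv.inv (1 + (0 : ℝ) • S) := continuousAt_matrix_inv _ <| by simp
    exact this.comp (f := fun γ : ℝ => 1 + γ • S) (by fun_prop)
  have hunit : ∀ᶠ γ in 𝓝 (0 : ℝ), IsUnit (1 + γ • S).det := by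
    have hdet : ContinuousAt (fun γ : ℝ => (1 + γ • S).det) 0 :=
      (Continuous.matrix_det (by fun_prop)).continuousAt
    filter_upwards [hdet.eventually_ne (by simp : (1 + (0 : ℝ) • S).det ≠ 0)] with γ hγ
      using hγ.isUnit
  set C := |(S ^ 3 * ((1 + (0 : ℝ) • S)⁻¹ * S)) i j| + 1
  have hbdd : ∀ᶠ γ in 𝓝 (0 : ℝ), |(S ^ 3 * ((1 + γ • S)⁻¹ * S)) i j| < C := by
    have hentry : ContinuousAt (fun γ : ℝ => |(S ^ 3 * ((1 + γ • S)⁻¹ * S)) i j|) 0 := by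
      fun_prop
    exact hentry.eventually_lt continuousAt_const (lt_add_one _)
  obtain ⟨γ₀, hγ₀, hball⟩ := Metric.eventually_nhds_iff.1 (hunit.and hbdd)
  refine ⟨C, γ₀, hγ₀, fun γ hγ => ?_⟩
  obtain ⟨hγunit, hγC⟩ := hball (by simpa using hγ)
  have hexp := third_order_expansion_of_one_add_smul_mul_eq (r := (1 + γ • S)⁻¹ * S) <| by
    rw [← Matrix.mul_assoc, mul_nonsing_inv _ hγunit, Matrix.one_mul]
  rw [hexp, sub_apply _ (γ ^ 3 • _), smul_apply, smul_eq_mul, sub_sub_cancel_left, abs_neg,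
    abs_mul, abs_pow, mul_comm]
  gcongr

end Matrix

section KacMurdockSzego

variable {R : Type*} [CommRing R]

theorem pow_dist_succ_left_of_le (ρ : R) {a j : ℕ} (h : j ≤ a) :
    ρ ^ Nat.dist (a + 1) j = ρ * ρ ^ Nat.dist a j := by
  rw [Nat.dist_eq_sub_of_le_right h, Nat.dist_eq_sub_of_le_right (by omega), ← pow_succ',
    Nat.sub_add_comm h]

theorem pow_dist_of_lt (ρ : R) {a j : ℕ} (h : a < j) :
    ρ ^ Nat.dist a j = ρ * ρ ^ Nat.dist (a + 1) j := by
  rw [Nat.dist_eq_sub_of_le h.le, Nat.dist_eq_sub_of_le h, ← pow_succ']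
  congr 1
  omega

/-- The correlation matrix of a stationary AR(1) process with parameter `ρ`. -/
def kmsMatrix (n : ℕ) (ρ : R) : Matrix (Fin n) (Fin n) R :=
  of fun i j => ρ ^ Nat.dist i j

def kmsTridiag (n : ℕ) (ρ : R) : Matrix (Fin n) (Fin n) R :=
  of fun i j =>
    if i = j then (if (i : ℕ) = 0 ∨ (i : ℕ) = n - 1 then 1 else 1 + ρ ^ 2)
    else if (i : ℕ) + 1 = j ∨ (j : ℕ) + 1 = i then -ρ else 0

theorem kmsTridiag_mulVec_apply {n : ℕ} (ρ : R) (f : ℕ → R) (i : Fin n) :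
    (kmsTridiag n ρ *ᵥ fun t => f t) i =
      (if (i : ℕ) = 0 ∨ (i : ℕ) = n - 1 then 1 else 1 + ρ ^ 2) * f i
        - ρ * ((if (i : ℕ) + 1 < n then f (i + 1) else 0)
          + (if 0 < (i : ℕ) then f (i - 1) else 0)) := by
  obtain ⟨a, ha⟩ := i
  set d : R := if a = 0 ∨ a = n - 1 then 1 else 1 + ρ ^ 2
  have hentry (t : ℕ) :
      (if a = t then d else if a + 1 = t ∨ t + 1 = a then -ρ else 0) * f t =
        (if t = a then d * f a else 0)
          - ρ * ((if t = a + 1 then f (a + 1) else 0)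
            + (if t = a - 1 then (if 0 < a then f (a - 1) else 0) else 0)) := by
    split_ifs <;> subst_vars <;> first | omega | ring
  simp only [mulVec, dotProduct, kmsTridiag, of_apply, Fin.ext_iff]
  rw [Fin.sum_univ_eq_sum_range
      (fun t => (if a = t then d else if a + 1 = t ∨ t + 1 = a then -ρ else 0) * f t),
    sum_congr rfl fun t _ => hentry t, sum_sub_distrib, ← mul_sum, sum_add_distrib,
    sum_ite_eq', sum_ite_eq', sum_ite_eq']
  simp only [mem_range, ha, show a - 1 < n by omega, if_true]

-- Off the diagonal, `t ↦ ρ ^ dist t j` is geometric with ratio `ρ` on each side of `j`, and such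
-- sequences are annihilated by the three-term recurrence of `kmsTridiag`.
theorem kmsTridiag_row_identity (ρ : R) {a j k : ℕ} (ha : a ≤ k) (hj : j ≤ k) (hk : 1 ≤ k) :
    (if a = 0 ∨ a = k then 1 else 1 + ρ ^ 2) * ρ ^ Nat.dist a j
      - ρ * ((if a + 1 < k + 1 then ρ ^ Nat.dist (a + 1) j else 0)
        + (if 0 < a then ρ ^ Nat.dist (a - 1) j else 0)) = if a = j then 1 - ρ ^ 2 else 0 := by
  rcases Nat.eq_zero_or_pos a with rfl | ha0
  · rcases Nat.eq_zero_or_pos j with rfl | hj0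
    · simp [show 0 < k by omega, Nat.dist, sq]
    · simp [show 0 < k by omega, hj0.ne, pow_dist_of_lt ρ hj0]
  obtain ⟨p, rfl⟩ : ∃ p, a = p + 1 := ⟨a - 1, by omega⟩
  simp only [Nat.add_sub_cancel, Nat.add_one_ne_zero, false_or, Nat.zero_lt_succ, if_true,
    add_lt_add_iff_right]
  rcases lt_trichotomy (p + 1) j with h | rfl | h
  · rw [pow_dist_of_lt ρ (by omega : p < j), pow_dist_of_lt ρ h]
    split_ifs <;> first | omega | ring
  · simp only [Nat.dist_self, show Nat.dist (p + 1 + 1) (p + 1) = 1 by simp [Nat.dist],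
      show Nat.dist p (p + 1) = 1 by simp [Nat.dist]]
    split_ifs <;> first | omega | ring
  · rw [pow_dist_succ_left_of_le ρ h.le, pow_dist_succ_left_of_le ρ (by omega : j ≤ p)]
    split_ifs <;> first | omega | ring

theorem kmsTridiag_mul_kmsMatrix (ρ : R) {k : ℕ} (hk : 1 ≤ k) :
    kmsTridiag (k + 1) ρ * kmsMatrix (k + 1) ρ = (1 - ρ ^ 2) • 1 := by
  ext i j
  have hrow := kmsTridiag_mulVec_apply ρ (fun t => ρ ^ Nat.dist t j) i
  rw [Nat.add_sub_cancel, kmsTridiag_row_identity ρ (Nat.lt_succ_iff.mp i.isLt)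
    (Nat.lt_succ_iff.mp j.isLt) hk] at hrow
  rw [Matrix.smul_apply, one_apply, smul_eq_mul, mul_ite, mul_one, mul_zero]
  simp only [Fin.ext_iff, ← hrow]
  rfl

theorem kmsMatrix_rev_rev (n : ℕ) (ρ : R) (i j : Fin n) :
    kmsMatrix n ρ i.rev j.rev = kmsMatrix n ρ i j := by
  simp only [kmsMatrix, of_apply, Fin.val_rev, Nat.dist]
  congr 1
  omega

theorem kmsMatrix_pow_apply_last_last (k : ℕ) (ρ : R) (p : ℕ) :
    (kmsMatrix (k + 1) ρ ^ p) (Fin.last k) (Fin.last k) = (kmsMatrix (k + 1) ρ ^ p) 0 0 := by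
  rw [← Fin.rev_zero, pow_apply_rev_rev (kmsMatrix_rev_rev _ ρ)]

theorem kmsMatrix_sq_apply_zero_zero (k : ℕ) (ρ : R) :
    (kmsMatrix (k + 1) ρ ^ 2) 0 0 = ∑ t ∈ range (k + 1), (ρ ^ 2) ^ t := by
  rw [sq, mul_apply, ← Fin.sum_univ_eq_sum_range (fun t => (ρ ^ 2) ^ t)]
  simp [kmsMatrix, Nat.dist_zero_left, Nat.dist_zero_right, ← pow_mul, ← pow_add, two_mul]

theorem kmsMatrix_pow_three_apply_zero_zero (k : ℕ) (ρ : R) :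
    (kmsMatrix (k + 1) ρ ^ 3) 0 0 =
      ∑ a ∈ range (k + 1), ∑ b ∈ range (k + 1), (ρ ^ 2) ^ max a b := by
  have hterm (a b : ℕ) : ρ ^ a * ρ ^ Nat.dist a b * ρ ^ b = (ρ ^ 2) ^ max a b := by
    rw [← pow_add, ← pow_add, ← pow_mul]
    congr 1
    simp only [Nat.dist]
    omega
  simp only [sum_range, pow_succ _ 2, sq, mul_apply, sum_mul, kmsMatrix, of_apply, Fin.val_zero,
    Nat.dist_zero_left, Nat.dist_zero_right, hterm]
  exact sum_comm

end KacMurdockSzego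

section KacMurdockSzegoField

variable {K : Type*} [Field K] {ρ : K}

theorem kmsMatrix_sq_apply_last_last (hρ : ρ ^ 2 ≠ 1) (k : ℕ) :
    (kmsMatrix (k + 1) ρ ^ 2) (Fin.last k) (Fin.last k) =
      (1 - ρ ^ (2 * (k + 1))) / (1 - ρ ^ 2) := by
  rw [kmsMatrix_pow_apply_last_last, kmsMatrix_sq_apply_zero_zero, geom_sum_eq hρ, pow_mul,
    ← neg_div_neg_eq, neg_sub, neg_sub]

theorem kmsMatrix_pow_three_apply_last_last (hρ : ρ ^ 2 ≠ 1) (k : ℕ) :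
    (kmsMatrix (k + 1) ρ ^ 3) (Fin.last k) (Fin.last k) =
      (1 - ρ ^ (2 * (k + 1))) * (1 + ρ ^ 2) / (1 - ρ ^ 2) ^ 2
        - 2 * ((k + 1 : ℕ) : K) * ρ ^ (2 * (k + 1)) / (1 - ρ ^ 2) := by
  rw [kmsMatrix_pow_apply_last_last, kmsMatrix_pow_three_apply_zero_zero,
    sum_range_sum_range_pow_max, sum_range_odd_mul_pow hρ, pow_mul]

end KacMurdockSzegoField

/-- Low-SNR (γ → 0⁺) second-order expansion of the determinant ratio
det(A_{mm})/(γ det A), where A = (1/γ)T' + I and T' is the tridiagonal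
inverse-correlation matrix of an AR(1) process with parameter ρ. -/
theorem uniform_sampling_low_snr_expansion (m : ℕ) (hm : 2 ≤ m) (ρ : ℝ)
    (hρ0 : 0 < ρ) (hρ1 : ρ < 1)
    (T' : Matrix (Fin m) (Fin m) ℝ)
    (hT : ∀ i j : Fin m, T' i j =
      if i = j then (if (i : ℕ) = 0 ∨ (i : ℕ) = m - 1 then 1 / (1 - ρ ^ 2)
        else (1 + ρ ^ 2) / (1 - ρ ^ 2))
      else if (i : ℕ) + 1 = (j : ℕ) ∨ (j : ℕ) + 1 = (i : ℕ) then -ρ / (1 - ρ ^ 2) else 0) :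
    ∃ C γ₀ : ℝ, 0 < γ₀ ∧ ∀ γ : ℝ, 0 < γ → γ < γ₀ →
      |(((γ⁻¹ • T' + 1).submatrix
            (fun i : Fin (m - 1) => Fin.castLE (Nat.sub_le m 1) i)
            (fun i : Fin (m - 1) => Fin.castLE (Nat.sub_le m 1) i)).det
          / (γ * (γ⁻¹ • T' + 1).det))
        - (1 - ((1 - ρ ^ (2 * m)) / (1 - ρ ^ 2)) * γ
          + ((1 - ρ ^ (2 * m)) * (1 + ρ ^ 2) / (1 - ρ ^ 2) ^ 2
            - 2 * m * ρ ^ (2 * m) / (1 - ρ ^ 2)) * γ ^ 2)| ≤ C * γ ^ 3 := by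
  obtain ⟨k, rfl⟩ : ∃ k, m = k + 1 := ⟨m - 1, by omega⟩
  have hρ : ρ ^ 2 ≠ 1 := by nlinarith
  set S := kmsMatrix (k + 1) ρ
  have hTS : T' * S = 1 := by
    have hT' : T' = (1 - ρ ^ 2)⁻¹ • kmsTridiag (k + 1) ρ := by
      ext i j
      rw [hT, Matrix.smul_apply, smul_eq_mul, kmsTridiag, of_apply]
      split_ifs <;> ring
    rw [hT', smul_mul_assoc, kmsTridiag_mul_kmsMatrix ρ (by omega), smul_smul,
      inv_mul_cancel₀ (sub_ne_zero.2 hρ.symm), one_smul]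
  obtain ⟨C, γ₀, hγ₀, hC⟩ :=
    exists_abs_inv_one_add_smul_mul_apply_sub_le S (Fin.last k) (Fin.last k)
  refine ⟨C, γ₀, hγ₀, fun γ hγ hγγ₀ => ?_⟩
  have hratio : ((γ⁻¹ • T' + 1).submatrix Fin.castSucc Fin.castSucc).det
      / (γ * (γ⁻¹ • T' + 1).det) = ((1 + γ • S)⁻¹ * S) (Fin.last k) (Fin.last k) := by
    rw [mul_comm, ← div_div, det_submatrix_castSucc_div_det,
      inv_inv_smul_add_one_of_mul_eq_one hTS hγ.ne', Matrix.smul_apply, smul_eq_mul,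
      mul_div_cancel_left₀ _ hγ.ne']
  have hpoly : (S - γ • S ^ 2 + γ ^ 2 • S ^ 3) (Fin.last k) (Fin.last k) =
      1 - ((1 - ρ ^ (2 * (k + 1))) / (1 - ρ ^ 2)) * γ
        + ((1 - ρ ^ (2 * (k + 1))) * (1 + ρ ^ 2) / (1 - ρ ^ 2) ^ 2
          - 2 * ((k + 1 : ℕ) : ℝ) * ρ ^ (2 * (k + 1)) / (1 - ρ ^ 2)) * γ ^ 2 := by
    rw [Matrix.add_apply, Matrix.sub_apply, Matrix.smul_apply, Matrix.smul_apply, kmsMatrix_sq_apply_last_last hρ,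
      kmsMatrix_pow_three_apply_last_last hρ]
    simp only [S, kmsMatrix, of_apply, Nat.dist_self, pow_zero, smul_eq_mul]
    ring
  have hbound := hC γ (by rwa [abs_of_pos hγ])
  rw [abs_of_pos hγ, ← hratio, hpoly] at hbound
  exact hbound
end

section
/- The tridiagonal matrix Σ' with diagonal entries a_1 = R_2, a_m = R_m, a_i = R_i + R_{i+1} − 1 (1 < i < m) and off-diagonal entries b_i = −√(R_{i+1}(R_{i+1}−1)), where R_i = 1/(1 − e^{−2κT_i}) with T_i > 0, is positive definite. -/
/-!
Σ' (`ouPrecision`) is `BᵀB` for the upper bidiagonal `B = ouCholeskyFactor`: row `k` of `B` is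
the standardized innovation `√R_{k+2} (x_k − e^{−κT_{k+2}} x_{k+1})` of the time-reversed OU
chain, using `√(R − 1) = e^{−κT} √R`, and the last row is `x_{m−1}` itself. Since
`det B = ∏ B_kk ≠ 0`, `B` is injective and `BᵀB` is positive definite.
-/

open Real Matrix

namespace Matrix

variable {α : Type*} {m : ℕ}

def upperBidiagonal [Zero α] (d e : ℕ → α) : Matrix (Fin m) (Fin m) α :=
  of fun i j => if (i : ℕ) = j then d i else if (i : ℕ) + 1 = j then e i else 0

theorem upperBidiagonal_isUpperTriangular [Zero α] (d e : ℕ → α) :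
    (upperBidiagonal (m := m) d e).IsUpperTriangular := by
  intro i j (hji : (j : ℕ) < i)
  simp only [upperBidiagonal, of_apply]
  grind

section CommRing

variable [CommRing α] (d e : ℕ → α)

theorem det_upperBidiagonal : (upperBidiagonal (m := m) d e).det = ∏ i : Fin m, d i := by
  rw [det_of_isUpperTriangular (upperBidiagonal_isUpperTriangular d e)]
  simp [upperBidiagonal]

theorem transpose_upperBidiagonal_mul_self_apply (i j : Fin m) :
    ((upperBidiagonal d e)ᵀ * upperBidiagonal d e : Matrix (Fin m) (Fin m) α) i j =
      if i = j then d i ^ 2 + (if (i : ℕ) = 0 then 0 else e (i - 1) ^ 2)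
      else if (i : ℕ) + 1 = j then d i * e i
      else if (j : ℕ) + 1 = i then d j * e j
      else 0 := by
  set b : ℕ → ℕ → α := fun k l => if k = l then d k else if k + 1 = l then e k else 0
  have hsplit : ∀ k : ℕ, b k i * b k j =
      (if k = i then d i * b i j else 0) + (if k + 1 = i then e k * b k j else 0) := by
    intro k
    simp only [b]
    split_ifs <;> first | omega | simp_all
  have sum_pred : ∀ f : ℕ → α, ∑ k ∈ Finset.range m, (if k + 1 = i then f k else 0) =
      if (i : ℕ) = 0 then 0 else f (i - 1) := by
    intro f
    split_ifs with hi
    · exact Finset.sum_eq_zero fun k _ => if_neg (by omega)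
    · rw [Finset.sum_eq_single_of_mem ((i : ℕ) - 1) (by simp; omega)
        fun k _ hk => if_neg (by omega), if_pos (by omega)]
  calc ((upperBidiagonal d e)ᵀ * upperBidiagonal d e : Matrix (Fin m) (Fin m) α) i j
      = ∑ k ∈ Finset.range m, b k i * b k j :=
        Fin.sum_univ_eq_sum_range (fun k => b k i * b k j) m
    _ = _ := by
      simp only [hsplit, Finset.sum_add_distrib, Finset.sum_ite_eq', Finset.mem_range, i.isLt,
        if_true, sum_pred, b, Fin.ext_iff]
      split_ifs <;> grind

end CommRing

theorem posDef_transpose_upperBidiagonal_mul_self {d : ℕ → ℝ} (e : ℕ → ℝ)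
    (hd : ∀ i : Fin m, d i ≠ 0) :
    ((upperBidiagonal d e)ᵀ * upperBidiagonal d e : Matrix (Fin m) (Fin m) ℝ).PosDef := by
  have hdet : IsUnit (upperBidiagonal (m := m) d e).det := by
    rw [det_upperBidiagonal, isUnit_iff_ne_zero]
    exact Finset.prod_ne_zero_iff.mpr fun i _ => hd i
  simpa [conjTranspose_eq_transpose_of_trivial] using PosDef.conjTranspose_mul_self _
    (mulVec_injective_iff_isUnit.mpr ((isUnit_iff_isUnit_det _).mpr hdet))

end Matrix

theorem one_lt_one_div_one_sub_exp_neg {x : ℝ} (hx : 0 < x) : 1 < 1 / (1 - exp (-x)) := by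
  have hlt : exp (-x) < 1 := exp_lt_one_iff.mpr (neg_neg_of_pos hx)
  exact one_lt_one_div (by linarith) (by linarith [exp_pos (-x)])

section OrnsteinUhlenbeck

noncomputable def ouPrecision (m : ℕ) (R : ℕ → ℝ) : Matrix (Fin m) (Fin m) ℝ :=
  of fun i j =>
    if i = j then
      (if (i : ℕ) = 0 then R 2
       else if (i : ℕ) = m - 1 then R m
       else R ((i : ℕ) + 1) + R ((i : ℕ) + 2) - 1)
    else if (i : ℕ) + 1 = j then -√(R ((i : ℕ) + 2) * (R ((i : ℕ) + 2) - 1))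
    else if (j : ℕ) + 1 = i then -√(R ((j : ℕ) + 2) * (R ((j : ℕ) + 2) - 1))
    else 0

noncomputable def ouCholeskyFactor (m : ℕ) (R : ℕ → ℝ) : Matrix (Fin m) (Fin m) ℝ :=
  upperBidiagonal (fun k => if k = m - 1 then 1 else √(R (k + 2))) (fun k => -√(R (k + 2) - 1))

variable {m : ℕ} {R : ℕ → ℝ}

theorem ouPrecision_eq_transpose_ouCholeskyFactor_mul_self (hm : 2 ≤ m)
    (hR : ∀ i, 2 ≤ i → i ≤ m → 1 ≤ R i) :
    ouPrecision m R = (ouCholeskyFactor m R)ᵀ * ouCholeskyFactor m R := by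
  ext i j
  have sqrt_mul_sub_one :
      ∀ k, 2 ≤ k → k ≤ m → √(R k * (R k - 1)) = √(R k) * √(R k - 1) :=
    fun k h2 hk => sqrt_mul (by linarith [hR k h2 hk]) _
  rw [ouCholeskyFactor, transpose_upperBidiagonal_mul_self_apply, ouPrecision, of_apply]
  split_ifs <;> grind

theorem posDef_ouPrecision (hm : 2 ≤ m) (hR : ∀ i, 2 ≤ i → i ≤ m → 1 ≤ R i) :
    (ouPrecision m R).PosDef := by
  rw [ouPrecision_eq_transpose_ouCholeskyFactor_mul_self hm hR]
  refine posDef_transpose_upperBidiagonal_mul_self _ fun k => ?_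
  split_ifs
  · exact one_ne_zero
  · exact (sqrt_pos.mpr (by linarith [hR (k + 2) (by omega) (by omega)])).ne'

end OrnsteinUhlenbeck

/-- The tridiagonal inverse-correlation matrix Σ' of an irregularly sampled OU process,
with R_i = 1/(1 − e^{−2κT_i}) for sampling intervals T_i > 0, is symmetric positive
definite. -/
theorem irregular_ou_inverse_correlation_posDef (m : ℕ) (hm : 2 ≤ m) (κ : ℝ) (hκ : 0 < κ)
    (T : ℕ → ℝ) (hT : ∀ i, 2 ≤ i → i ≤ m → 0 < T i)
    (R : ℕ → ℝ)
    (hR : ∀ i, 2 ≤ i → i ≤ m → R i = 1 / (1 - Real.exp (-2 * κ * T i)))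
    (S' : Matrix (Fin m) (Fin m) ℝ)
    (hS' : ∀ i j : Fin m, S' i j =
      if i = j then
        (if (i : ℕ) = 0 then R 2
         else if (i : ℕ) = m - 1 then R m
         else R ((i : ℕ) + 1) + R ((i : ℕ) + 2) - 1)
      else if (i : ℕ) + 1 = (j : ℕ) then -Real.sqrt (R ((i : ℕ) + 2) * (R ((i : ℕ) + 2) - 1))
      else if (j : ℕ) + 1 = (i : ℕ) then -Real.sqrt (R ((j : ℕ) + 2) * (R ((j : ℕ) + 2) - 1))
      else 0) :
    S'.PosDef := by
  have hR_ge_one : ∀ i, 2 ≤ i → i ≤ m → 1 ≤ R i := fun i h2 hi => by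
    rw [hR i h2 hi, show -2 * κ * T i = -(2 * κ * T i) by ring]
    exact (one_lt_one_div_one_sub_exp_neg (by have := hT i h2 hi; positivity)).le
  rw [show S' = ouPrecision m R from Matrix.ext hS']
  exact posDef_ouPrecision hm hR_ge_one
end
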